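/- If K admits a weak tower of complements, then the given value group section t has a factor set with values in k*; i.e., for all α, β ∈ G the element t(α)t(β)t(−α−β) lies in k ⊆ K. -/

import Mathlib

set_option autoImplicit false

universe u v

/-- A Dedekind cut of a linearly ordered abelian group, represented by its left part
(`L = Λ^L`); the right part is the complement of `L`.  The cuts `-∞` (`L = ∅`) and
`+∞` (`L = G`) are included. -/
structure Cut (G : Type u) [AddCommGroup G] [LinearOrder G] [IsOrderedAddMonoid G] : Type u where
  L : Set G
  lower : ∀ ⦃x y : G⦄, y ∈ L → x ≤ y → x ∈ L

namespace Cut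

variable {G : Type u} [AddCommGroup G] [LinearOrder G] [IsOrderedAddMonoid G]

/-- Cuts are ordered by inclusion of left parts. -/
instance : PartialOrder (Cut G) where
  le Λ Γ := Λ.L ⊆ Γ.L
  le_refl _ := subset_rfl
  le_trans _ _ _ h h' := fun x hx => h' (h hx)
  le_antisymm := by
    rintro ⟨L₁, h₁⟩ ⟨L₂, h₂⟩ h h'
    simpa using Set.Subset.antisymm h h'

/-- `γ⁻`, the cut with left part `(-∞, γ)`. -/
def lcut (γ : G) : Cut G := ⟨{x | x < γ}, fun _ _ hy hxy => lt_of_le_of_lt hxy hy⟩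

/-- `γ⁺`, the cut with left part `(-∞, γ]`. -/
def rcut (γ : G) : Cut G := ⟨{x | x ≤ γ}, fun _ _ hy hxy => le_trans hxy hy⟩

/-- The left sum of cuts: the smallest cut whose left part contains all `λ + γ`
with `λ < Λ`, `γ < Γ`. -/
instance : Add (Cut G) :=
  ⟨fun Λ Γ => ⟨{x | ∃ l ∈ Λ.L, ∃ g ∈ Γ.L, x ≤ l + g}, by
    rintro x y ⟨l, hl, g, hg, hy⟩ hxy
    exact ⟨l, hl, g, hg, hxy.trans hy⟩⟩⟩

/-- The right sum of cuts: the largest cut whose right part contains all `λ + γ`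
with `λ > Λ`, `γ > Γ`. -/
def addR (Λ Γ : Cut G) : Cut G :=
  ⟨{x | ∀ l ∉ Λ.L, ∀ g ∉ Γ.L, x < l + g}, by
    intro x y hy hxy l hl g hg
    exact lt_of_le_of_lt hxy (hy l hl g hg)⟩

/-- The right difference of cuts: the largest cut whose right part contains all
`λ − γ` with `λ > Λ`, `γ < Γ`. -/
def sub (Λ Γ : Cut G) : Cut G :=
  ⟨{x | ∀ l ∉ Λ.L, ∀ g ∈ Γ.L, x < l - g}, by
    intro x y hy hxy l hl g hg
    exact lt_of_le_of_lt hxy (hy l hl g hg)⟩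

/-- Translation `γ + Λ` of a cut by a group element, with left part `{γ + λ : λ ∈ Λ^L}`. -/
def transl (γ : G) (Λ : Cut G) : Cut G :=
  ⟨(fun x => γ + x) '' Λ.L, by
    rintro x y ⟨l, hl, rfl⟩ hxy
    exact ⟨x - γ, Λ.lower hl (sub_le_iff_le_add'.mpr hxy), by show γ + (x - γ) = x; rw [add_comm, sub_add_cancel]⟩⟩

/-- Negation of a cut: `-Λ = (-Λ^R, -Λ^L)`. -/
def neg (Λ : Cut G) : Cut G :=
  ⟨{x | -x ∉ Λ.L}, by
    intro x y hy hxy hx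
    exact hy (Λ.lower hx (neg_le_neg hxy))⟩

/-- The `n`-fold left sum `Λ + Γ + ⋯ + Γ` (`Γ` added `n` times). -/
def addn (Λ Γ : Cut G) : ℕ → Cut G
  | 0 => Λ
  | n + 1 => addn Λ Γ n + Γ

/-- The `n`-fold right difference `Λ − Γ − ⋯ − Γ` (`Γ` subtracted `n` times). -/
def subn (Λ Γ : Cut G) : ℕ → Cut G
  | 0 => Λ
  | n + 1 => (subn Λ Γ n).sub Γ

/-- `nΓ = Γ + ⋯ + Γ` (`n` times); by convention `0 • Γ = 0⁺`, the neutral element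
of the left sum. -/
def nsmul : ℕ → Cut G → Cut G
  | 0, _ => rcut 0
  | 1, Γ => Γ
  | n + 2, Γ => nsmul (n + 1) Γ + Γ

/-- `ℤ`-multiples of a cut: `(-n)Γ := -(nΓ)`. -/
def zsmul (n : ℤ) (Γ : Cut G) : Cut G :=
  if 0 ≤ n then nsmul n.toNat Γ else (nsmul (-n).toNat Γ).neg

/-- `ℤΓ := sup {nΓ : n ∈ ℤ}`. -/
def zmul (Γ : Cut G) : Cut G :=
  ⟨⋃ n : ℤ, (zsmul n Γ).L, by
    intro x y hy hxy
    rcases Set.mem_iUnion.1 hy with ⟨n, hn⟩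
    exact Set.mem_iUnion.2 ⟨n, (zsmul n Γ).lower hn hxy⟩⟩

/-- `S⁺`: the smallest cut whose left part contains the set `S`. -/
def ofSet (s : Set G) : Cut G :=
  ⟨{x | ∃ γ ∈ s, x ≤ γ}, by
    rintro x y ⟨γ, hγ, hy⟩ hxy
    exact ⟨γ, hγ, hxy.trans hy⟩⟩

/-- The supremum (maximum) of two cuts. -/
def max (Λ Γ : Cut G) : Cut G :=
  ⟨Λ.L ∪ Γ.L, by
    rintro x y (hy | hy) hxy
    · exact Or.inl (Λ.lower hy hxy)
    · exact Or.inr (Γ.lower hy hxy)⟩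

/-- The infimum of a set of cuts. -/
def inf (s : Set (Cut G)) : Cut G :=
  ⟨{x | ∀ Λ ∈ s, x ∈ Λ.L}, by
    intro x y hy hxy Λ hΛ
    exact Λ.lower (hy Λ hΛ) hxy⟩

end Cut

/-- A valued field `K` (of equal characteristic) with value group `G`, a value group
section `t`, and an embedded residue field `k ⊆ K` (the residue field section is the
inclusion). The valuation is written additively, with `v 0 = ⊤`. -/
structure VData (K : Type u) (G : Type v) [Field K] [AddCommGroup G] [LinearOrder G] [IsOrderedAddMonoid G] where
  v : K → WithTop G
  k : Subfield K
  t : G → K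
  v_eq_top : ∀ x : K, v x = ⊤ ↔ x = 0
  v_mul : ∀ x y : K, v (x * y) = v x + v y
  v_sub : ∀ x y : K, min (v x) (v y) ≤ v (x - y)
  v_surj : ∀ γ : G, ∃ x : K, v x = (γ : WithTop G)
  v_t : ∀ γ : G, v (t γ) = (γ : WithTop G)
  t_neg : ∀ γ : G, t (-γ) = (t γ)⁻¹
  v_k : ∀ c ∈ k, c ≠ 0 → v c = (0 : WithTop G)
  k_res : ∀ x : K, v x = (0 : WithTop G) → ∃ c ∈ k, (0 : WithTop G) < v (x - c)

namespace VData

variable {K : Type u} {G : Type v} [Field K] [AddCommGroup G] [LinearOrder G] [IsOrderedAddMonoid G]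

/-- `O[Λ] = {x ∈ K : v(x) > Λ}`, the (possibly fractional) ideal of the valuation
ring associated with the cut `Λ`. -/
def Oc (S : VData K G) (Λ : Cut G) : Set K :=
  {x | ∀ γ : G, S.v x = (γ : WithTop G) → γ ∉ Λ.L}

/-- `O_R[Λ] = {x ∈ R : v(x) > Λ}`, for a subring `R` of `K`. -/
def OcR (S : VData K G) (R : Subring K) (Λ : Cut G) : Set K :=
  {x | x ∈ R ∧ ∀ γ : G, S.v x = (γ : WithTop G) → γ ∉ Λ.L}

end VData

/-- Axioms CA–CD of a (weak) tower of complements for the valued field `K`: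
each `A[Λ]` is a `k`-subspace of `K` (CA), `A[Λ] ⊕ O[Λ] = K` (CB),
`t(γ)·k ⊆ A[γ⁺]` (CC), and `Γ ≤ Λ ↔ A[Γ] ⊆ A[Λ]` (CD). -/
structure TowerBase {K : Type u} {G : Type v} [Field K] [AddCommGroup G] [LinearOrder G] [IsOrderedAddMonoid G]
    (S : VData K G) where
  A : Cut G → Set K
  zero_mem : ∀ Λ : Cut G, (0 : K) ∈ A Λ
  add_mem : ∀ Λ : Cut G, ∀ x ∈ A Λ, ∀ y ∈ A Λ, x + y ∈ A Λ
  smul_mem : ∀ Λ : Cut G, ∀ c ∈ S.k, ∀ x ∈ A Λ, c * x ∈ A Λ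
  disj : ∀ Λ : Cut G, ∀ x ∈ A Λ, x ∈ S.Oc Λ → x = 0
  spans : ∀ Λ : Cut G, ∀ x : K, ∃ a ∈ A Λ, ∃ o ∈ S.Oc Λ, x = a + o
  sec_mem : ∀ γ : G, ∀ c ∈ S.k, c * S.t γ ∈ A (Cut.rcut γ)
  mono : ∀ Γ Λ : Cut G, Γ ≤ Λ ↔ A Γ ⊆ A Λ

/-- A weak tower of complements: CA–CD together with CF (`A[γ+Λ] = t(γ)·A[Λ]`). -/
structure WeakTower {K : Type u} {G : Type v} [Field K] [AddCommGroup G] [LinearOrder G] [IsOrderedAddMonoid G]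
    (S : VData K G) extends TowerBase S where
  transl_eq : ∀ (γ : G) (Λ : Cut G),
    A (Cut.transl γ Λ) = (fun x => S.t γ * x) '' A Λ

/-- A tower of complements: CA–CD together with the multiplicativity axiom CE
(`A[Λ]·A[Γ] ⊆ A[Λ+Γ]`). -/
structure Tower {K : Type u} {G : Type v} [Field K] [AddCommGroup G] [LinearOrder G] [IsOrderedAddMonoid G]
    (S : VData K G) extends TowerBase S where
  mul_mem : ∀ Λ Γ : Cut G, ∀ x ∈ A Λ, ∀ y ∈ A Γ, x * y ∈ A (Λ + Γ)

/-- Axioms CA–CD of a (weak) tower of complements for a subring `R` of `K`. -/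
structure RTowerBase {K : Type u} {G : Type v} [Field K] [AddCommGroup G] [LinearOrder G] [IsOrderedAddMonoid G]
    (S : VData K G) (R : Subring K) where
  A : Cut G → Set K
  subset_R : ∀ Λ : Cut G, A Λ ⊆ (R : Set K)
  zero_mem : ∀ Λ : Cut G, (0 : K) ∈ A Λ
  add_mem : ∀ Λ : Cut G, ∀ x ∈ A Λ, ∀ y ∈ A Λ, x + y ∈ A Λ
  smul_mem : ∀ Λ : Cut G, ∀ c ∈ S.k, ∀ x ∈ A Λ, c * x ∈ A Λ
  disj : ∀ Λ : Cut G, ∀ x ∈ A Λ, x ∈ S.OcR R Λ → x = 0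
  spans : ∀ Λ : Cut G, ∀ x ∈ R, ∃ a ∈ A Λ, ∃ o ∈ S.OcR R Λ, x = a + o
  sec_mem : ∀ γ : G, ∀ c ∈ S.k, c * S.t γ ∈ A (Cut.rcut γ)
  mono : ∀ Γ Λ : Cut G, Γ ≤ Λ ↔ A Γ ⊆ A Λ

/-- A weak tower of complements for a subring `R` of `K`: CA–CD together with CF. -/
structure RWeakTower {K : Type u} {G : Type v} [Field K] [AddCommGroup G] [LinearOrder G] [IsOrderedAddMonoid G]
    (S : VData K G) (R : Subring K) extends RTowerBase S R where
  transl_eq : ∀ (γ : G) (Λ : Cut G),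
    A (Cut.transl γ Λ) = (fun x => S.t γ * x) '' A Λ

namespace RTowerBase

variable {K : Type u} {G : Type v} [Field K] [AddCommGroup G] [LinearOrder G] [IsOrderedAddMonoid G]
  {S : VData K G} {R : Subring K}

/-- The support of `x ∈ R` with respect to a (weak) tower of complements:
`γ ∈ supp x` iff the coefficient `a_γ(x)` in the decomposition
`x = x₁ + a_γ(x) t(γ) + x₃` (with `x₁ ∈ A[γ⁻]`, `v(x₃) > γ`) is nonzero, i.e.
iff `x ∉ A[γ⁻] + O[γ⁺]`. -/
def supp (T : RTowerBase S R) (x : K) : Set G :=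
  {γ | ¬ ∃ a ∈ T.A (Cut.lcut γ), ∃ o ∈ S.OcR R (Cut.rcut γ), x = a + o}

/-- `μ(x) := (supp x)⁺`, the smallest cut whose left part contains the support. -/
def mu (T : RTowerBase S R) (x : K) : Cut G :=
  Cut.ofSet (T.supp x)

end RTowerBase

namespace TowerBase

variable {K : Type u} {G : Type v} [Field K] [AddCommGroup G] [LinearOrder G] [IsOrderedAddMonoid G]
  {S : VData K G}

/-- `μ(x) := inf {Λ : x ∈ A[Λ]}`. -/
def muInf (T : TowerBase S) (x : K) : Cut G :=
  Cut.inf {Λ | x ∈ T.A Λ}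

end TowerBase

namespace RTowerBase

variable {K : Type u} {G : Type v} [Field K] [AddCommGroup G] [LinearOrder G] [IsOrderedAddMonoid G]
  {S : VData K G} {R : Subring K}

/-- `μ(x) := inf {Λ : x ∈ A[Λ]}`. -/
def muInf (T : RTowerBase S R) (x : K) : Cut G :=
  Cut.inf {Λ | x ∈ T.A Λ}

end RTowerBase

/-! Translating by the section, `A[(α+β)⁺] = t(α)·A[β⁺]`, so `t(α)t(β)` lands in
`A[(α+β)⁺]` and then `t(−α−β)t(α)t(β)` lands in `A[0⁺]`. It has value `0`, and an element
of `A[0⁺]` of value `0` lies in `k`: it differs from its residue `c ∈ k ⊆ A[0⁺]` by an element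
of `A[0⁺] ∩ O[0⁺] = 0`. -/

namespace Cut

variable {G : Type v} [AddCommGroup G] [LinearOrder G] [IsOrderedAddMonoid G]

theorem transl_rcut (γ δ : G) : transl γ (rcut δ) = rcut (γ + δ) := by
  unfold transl rcut
  congr 1
  ext x
  constructor
  · rintro ⟨l, hl, rfl⟩
    exact add_le_add_right hl γ
  · intro hx
    exact ⟨x - γ, sub_le_iff_le_add'.mpr hx, add_sub_cancel γ x⟩

end Cut

namespace VData

variable {K : Type u} {G : Type v} [Field K] [AddCommGroup G] [LinearOrder G] [IsOrderedAddMonoid G]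
  (S : VData K G)

theorem t_ne_zero (γ : G) : S.t γ ≠ 0 := by
  intro h
  have := S.v_t γ
  rw [h, (S.v_eq_top 0).mpr rfl] at this
  exact WithTop.top_ne_coe this

theorem t_zero_mul_self : S.t 0 * S.t 0 = 1 := by
  conv_lhs => enter [2]; rw [← neg_zero, S.t_neg]
  exact mul_inv_cancel₀ (S.t_ne_zero 0)

theorem t_zero_mem_k : S.t 0 ∈ S.k := by
  rcases mul_self_eq_one_iff.mp S.t_zero_mul_self with h | h <;> rw [h]
  · exact S.k.one_mem
  · exact S.k.neg_mem S.k.one_mem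

theorem mem_Oc_rcut_of_lt {x : K} {γ : G} (h : (γ : WithTop G) < S.v x) :
    x ∈ S.Oc (Cut.rcut γ) := by
  intro δ hδ hle
  rw [hδ, WithTop.coe_lt_coe] at h
  exact not_le.mpr h hle

end VData

namespace TowerBase

variable {K : Type u} {G : Type v} [Field K] [AddCommGroup G] [LinearOrder G] [IsOrderedAddMonoid G]
  {S : VData K G} (T : TowerBase S)

theorem sub_mem {Λ : Cut G} {x y : K} (hx : x ∈ T.A Λ) (hy : y ∈ T.A Λ) : x - y ∈ T.A Λ := by
  simpa [sub_eq_add_neg] using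
    T.add_mem Λ x hx _ (T.smul_mem Λ (-1) (S.k.neg_mem S.k.one_mem) y hy)

theorem k_subset_A_rcut_zero : (S.k : Set K) ⊆ T.A (Cut.rcut 0) := by
  intro c hc
  have h := T.sec_mem 0 (c * S.t 0) (S.k.mul_mem hc S.t_zero_mem_k)
  rwa [mul_assoc, S.t_zero_mul_self, mul_one] at h

theorem mem_k_of_mem_A_rcut_zero {y : K} (hy : y ∈ T.A (Cut.rcut 0)) (hv : S.v y = (0 : G)) :
    y ∈ S.k := by
  obtain ⟨c, hc, hvc⟩ := S.k_res y hv
  have hyc : y - c = 0 :=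
    T.disj _ _ (T.sub_mem hy (T.k_subset_A_rcut_zero hc)) (S.mem_Oc_rcut_of_lt hvc)
  rwa [sub_eq_zero.mp hyc]

end TowerBase

namespace WeakTower

variable {K : Type u} {G : Type v} [Field K] [AddCommGroup G] [LinearOrder G] [IsOrderedAddMonoid G]
  {S : VData K G} (T : WeakTower S)

theorem t_mul_mem_A_rcut {β : G} {x : K} (γ : G) (hx : x ∈ T.A (Cut.rcut β)) :
    S.t γ * x ∈ T.A (Cut.rcut (γ + β)) := by
  rw [← Cut.transl_rcut, T.transl_eq]
  exact ⟨x, hx, rfl⟩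

end WeakTower

/-- If `K` admits a weak tower of complements, then the given value
group section `t` has a factor set with values in `k*`: for all `α, β ∈ G` the
element `t(α)·t(β)·t(−α−β)` lies in `k ⊆ K`. -/
theorem section_has_factor_set {K : Type u} {G : Type v}
    [Field K] [AddCommGroup G] [LinearOrder G] [IsOrderedAddMonoid G]
    (S : VData K G) (T : WeakTower S) (α β : G) :
    S.t α * S.t β * S.t (-α - β) ∈ S.k := by
  have htβ : S.t β ∈ T.A (Cut.rcut β) := by simpa using T.sec_mem β 1 S.k.one_mem
  have hA : S.t (-α - β) * (S.t α * S.t β) ∈ T.A (Cut.rcut 0) := by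
    simpa using T.t_mul_mem_A_rcut (-α - β) (T.t_mul_mem_A_rcut α htβ)
  have hv : S.v (S.t (-α - β) * (S.t α * S.t β)) = (0 : G) := by
    simp only [S.v_mul, S.v_t, ← WithTop.coe_add]
    congr 1
    abel
  rw [mul_comm]
  exact T.mem_k_of_mem_A_rcut_zero hA hv
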